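/- Let C₁, C₂ be two circles on the unit sphere S² (intersections of S² with planes through the origin), representing directions parallel to two planes Σ₁, Σ₂. If the angle between Σ₁ and Σ₂ is at least K·η (for η > 0, K ≥ 2), then the set of directions v ∈ C₂ with dist(v, C₁) ≤ η is contained in the union of two spherical caps of angular radius O(1/K)·(appropriately: radius η/ sin(∠(Σ₁,Σ₂)) ≤ 1/K). -/

import Mathlib

/-!
Let `w` span the line `Σ₁ ∩ Σ₂` and let `u` be the unit vector of `Σ₂` orthogonal to `w`.
For `v ∈ C₂` one has `⟪v, n₁⟫ = sin ∠(Σ₁, Σ₂) · ⟪v, u⟫`, while `|⟪v, n₁⟫| ≤ dist(v, C₁) ≤ η`;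
hence `|⟪v, u⟫| ≤ 1 / K`. As `v = ⟪v, u⟫ u + ⟪v, w⟫ w`, this forces `⟪v, w⟫² ≥ 1 - 1 / K²`,
i.e. `v` lies within `√2 / K` of `w` or of `-w`.
-/

open scoped RealInnerProductSpace

open Metric InnerProductGeometry Module Real

section InnerProductSpace

variable {E : Type*} [NormedAddCommGroup E] [InnerProductSpace ℝ E]

theorem abs_inner_le_mul_infDist {s : Set E} (hs : s.Nonempty) {n : E}
    (hsn : ∀ w ∈ s, ⟪w, n⟫ = 0) (v : E) : |⟪v, n⟫| ≤ ‖n‖ * infDist v s := by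
  rcases (norm_nonneg n).eq_or_lt with hn | hn
  · simp [norm_eq_zero.1 hn.symm]
  rw [← div_le_iff₀' hn, le_infDist hs]
  intro w hw
  rw [div_le_iff₀' hn, dist_eq_norm, ← sub_zero ⟪v, n⟫, ← hsn w hw, ← inner_sub_left,
    mul_comm]
  exact abs_real_inner_le_norm _ _

theorem exists_unit_inner_eq_sin_angle_mul {x y : E} (hx : ‖x‖ = 1) (hy : ‖y‖ = 1)
    (hxy : sin (angle x y) ≠ 0) :
    ∃ u : E, ‖u‖ = 1 ∧ ⟪u, y⟫ = 0 ∧ ∀ v, ⟪v, y⟫ = 0 → ⟪v, x⟫ = sin (angle x y) * ⟪v, u⟫ := by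
  set p := x - ⟪x, y⟫ • y
  have hyy : ⟪y, y⟫ = 1 := by rw [real_inner_self_eq_norm_sq, hy, one_pow]
  have hpy : ⟪p, y⟫ = 0 := by simp [p, inner_sub_left, real_inner_smul_left, hy]
  have hp : ‖p‖ = sin (angle x y) := by
    have h := sin_angle_mul_norm_mul_norm x y
    rw [hx, hy, mul_one, mul_one, real_inner_self_eq_norm_sq, hx, hyy] at h
    rw [h, ← sqrt_sq (norm_nonneg p), norm_sub_sq_real, real_inner_smul_right, norm_smul, hx, hy]
    simp only [norm_eq_abs, mul_one, sq_abs]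
    ring_nf
  have hvp : ∀ v, ⟪v, y⟫ = 0 → ⟪v, x⟫ = ⟪v, p⟫ := fun v hv => by
    simp [p, inner_sub_right, real_inner_smul_right, hv]
  refine ⟨‖p‖⁻¹ • p, ?_, ?_, fun v hv => ?_⟩
  · rw [norm_smul, norm_inv, norm_norm, inv_mul_cancel₀ (hp ▸ hxy)]
  · rw [real_inner_smul_left, hpy, mul_zero]
  · rw [real_inner_smul_right, ← hp, mul_inv_cancel_left₀ (hp ▸ hxy), hvp v hv]

theorem mem_closedBall_union_neg_of_inner_sq {v w : E} (hv : ‖v‖ = 1) (hw : ‖w‖ = 1)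
    {r : ℝ} (hr : 0 ≤ r) (h : 2 * (1 - ⟪v, w⟫ ^ 2) ≤ r ^ 2) :
    v ∈ closedBall w r ∪ closedBall (-w) r := by
  have hvw : |⟪v, w⟫| ≤ 1 := by simpa [hv, hw] using abs_real_inner_le_norm v w
  simp only [Set.mem_union, mem_closedBall, dist_eq_norm, sub_neg_eq_add]
  rw [← pow_le_pow_iff_left₀ (norm_nonneg _) hr two_ne_zero,
    ← pow_le_pow_iff_left₀ (norm_nonneg _) hr two_ne_zero, norm_sub_sq_real, norm_add_sq_real,
    hv, hw]
  rcases le_total 0 ⟪v, w⟫ with h0 | h0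
  · left; nlinarith [abs_of_nonneg h0]
  · right; nlinarith [abs_of_nonpos h0]

theorem exists_orthonormalBasis_fin_three (hE : finrank ℝ E = 3) {u n : E} (hu : ‖u‖ = 1)
    (hn : ‖n‖ = 1) (hun : ⟪u, n⟫ = 0) :
    ∃ b : OrthonormalBasis (Fin 3) ℝ E, b 0 = u ∧ b 1 = n := by
  have : FiniteDimensional ℝ E := Module.finite_of_finrank_pos (by omega)
  have horth : Orthonormal ℝ (({0, 1} : Set (Fin 3)).domRestrict ![u, n, 0]) := by
    constructor
    · rintro ⟨i, hi⟩
      rcases hi with rfl | rfl <;> simp [hu, hn, Set.domRestrict]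
    · rintro ⟨i, hi⟩ ⟨j, hj⟩ hij
      rcases hi with rfl | rfl <;> rcases hj with rfl | rfl <;>
        simp_all [Set.domRestrict, real_inner_comm u n]
  obtain ⟨b, hb⟩ := horth.exists_orthonormalBasis_extension_of_card_eq (by simp [hE])
  exact ⟨b, hb 0 (by simp), hb 1 (by simp)⟩

theorem inner_sq_orthonormalBasis_two (b : OrthonormalBasis (Fin 3) ℝ E) {v : E}
    (hv : ⟪v, b 1⟫ = 0) : ⟪v, b 2⟫ ^ 2 = ‖v‖ ^ 2 - ⟪v, b 0⟫ ^ 2 := by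
  have := b.sum_sq_inner_right v
  simp only [Fin.sum_univ_three, real_inner_comm v, hv] at this ⊢
  linarith

end InnerProductSpace

/-- Directions on the circle `C₂` (unit vectors orthogonal to `n₂`) that are within
distance `η` of the circle `C₁` (unit vectors orthogonal to `n₁`) are contained in two
caps of radius `O(1/K)`, provided the angle between the planes satisfies
`sin ∠(Σ₁, Σ₂) ≥ K η`. -/
theorem two_caps (n₁ n₂ : EuclideanSpace ℝ (Fin 3)) (hn₁ : ‖n₁‖ = 1) (hn₂ : ‖n₂‖ = 1)
    (η K : ℝ) (hη : 0 < η) (hK : 2 ≤ K)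
    (hangle : K * η ≤ Real.sin (InnerProductGeometry.angle n₁ n₂)) :
    ∃ c₁ c₂ : EuclideanSpace ℝ (Fin 3),
      {v : EuclideanSpace ℝ (Fin 3) | ‖v‖ = 1 ∧ ⟪v, n₂⟫ = 0 ∧
          Metric.infDist v {w : EuclideanSpace ℝ (Fin 3) | ‖w‖ = 1 ∧ ⟪w, n₁⟫ = 0} ≤ η}
        ⊆ Metric.closedBall c₁ (2 / K) ∪ Metric.closedBall c₂ (2 / K) := by
  have hK₀ : 0 < K := by linarith
  have hsin : 0 < sin (angle n₁ n₂) := (mul_pos hK₀ hη).trans_le hangle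
  obtain ⟨u, hu, hun₂, hn₁u⟩ := exists_unit_inner_eq_sin_angle_mul hn₁ hn₂ hsin.ne'
  obtain ⟨b, hb₀, hb₁⟩ := exists_orthonormalBasis_fin_three finrank_euclideanSpace_fin hu hn₂ hun₂
  have hb₂n₂ : ⟪b 2, n₂⟫ = 0 := hb₁ ▸ b.orthonormal.2 (by decide)
  -- `b 2` spans the line `Σ₁ ∩ Σ₂`; the two caps are centred at its ends.
  have hb₂ : ‖b 2‖ = 1 ∧ ⟪b 2, n₁⟫ = 0 := by
    refine ⟨b.orthonormal.1 2, ?_⟩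
    rw [hn₁u _ hb₂n₂, ← hb₀, b.orthonormal.2 (by decide), mul_zero]
  refine ⟨b 2, -b 2, fun v ⟨hv, hvn₂, hvη⟩ => ?_⟩
  have hvn₁ : |⟪v, n₁⟫| ≤ η := by
    have := abs_inner_le_mul_infDist (s := {w | ‖w‖ = 1 ∧ ⟪w, n₁⟫ = 0}) ⟨b 2, hb₂⟩
      (fun w hw => hw.2) v
    rw [hn₁, one_mul] at this
    exact this.trans hvη
  have hvu : |⟪v, u⟫| ≤ 1 / K := by
    rw [hn₁u v hvn₂, abs_mul, abs_of_pos hsin] at hvn₁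
    rw [le_div_iff₀ hK₀]
    nlinarith [abs_nonneg ⟪v, u⟫]
  apply mem_closedBall_union_neg_of_inner_sq hv (b.orthonormal.1 2) (by positivity)
  rw [inner_sq_orthonormalBasis_two b (hb₁ ▸ hvn₂), hv, hb₀]
  have hvu₂ := pow_le_pow_left₀ (abs_nonneg _) hvu 2
  rw [sq_abs] at hvu₂
  linarith [sq_nonneg (1 / K), show (2 / K) ^ 2 = 4 * (1 / K) ^ 2 by ring]
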